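/- Let M and M̃ be complex-valued continuous kernels on the triangle {(x,t) : 0 ≤ t ≤ x ≤ π}. For λ ∈ ℂ, let ψ(·,λ) be the solution of the adjoint equation −i·ψ'(x) + ∫ₓ^π M(t,x)·ψ(t) dt = λ·ψ(x) with ψ(π,λ) = 1, and let ẽ(·,λ) be the solution of i·ẽ'(x) + ∫₀ˣ M̃(x,t)·ẽ(t) dt = λ·ẽ(x) with ẽ(0,λ) = 1. If e(π,λ) = ẽ(π,λ) for all λ ∈ ℂ, where e(·,λ) is the solution of equation (1) with kernel M and e(0,λ) = 1, then ∫₀^π ψ(x,λ) · (∫₀ˣ (M(x,t) − M̃(x,t))·ẽ(t,λ) dt) dx = 0 for all λ ∈ ℂ. -/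

import Mathlib

open Complex MeasureTheory Set Real

/-- The triangle `{(x,t) : 0 ≤ t ≤ x ≤ π}`. -/
def Triangle : Set (ℝ × ℝ) := {p | 0 ≤ p.2 ∧ p.2 ≤ p.1 ∧ p.1 ≤ Real.pi}

/-!
For `ψ` solving the adjoint equation with kernel `K` and `y` solving equation (1) with kernel
`L` (same `λ`), integrating `ψ · i y'` by parts and exchanging the order of integration over the
triangle in `∫ ψ(x) ∫₀ˣ K(x,t) y(t) dt dx`, which by the adjoint equation becomes
`∫ (λ ψ + i ψ') y`, give the Lagrange identity
`∫₀^π ψ(x) ∫₀ˣ (K − L)(x,t) y(t) dt dx = i (ψ(π) y(π) − ψ(0) y(0))`.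
For `L = K`, `y = e` the left side vanishes, so `ψ(0) = e(π)`; for `L = M̃`, `y = ẽ` the left
side is the integral in question, equal to `i (ẽ(π) − e(π)) = 0`.
-/

universe u v in
theorem ContinuousOn.exists_continuous_eqOn {X : Type u} {Y : Type v} [TopologicalSpace X]
    [NormalSpace X] [TopologicalSpace Y] [TietzeExtension.{u, v} Y] {s : Set X}
    (hs : IsClosed s) {f : X → Y} (hf : ContinuousOn f s) :
    ∃ g : X → Y, Continuous g ∧ EqOn g f s := by
  obtain ⟨g, hg⟩ := ContinuousMap.exists_restrict_eq hs ⟨s.domRestrict f, hf.domRestrict⟩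
  exact ⟨g, g.continuous, fun x hx => congr($hg ⟨x, hx⟩)⟩

namespace Triangle

theorem isClosed : IsClosed Triangle :=
  (isClosed_le continuous_const continuous_snd).inter
    ((isClosed_le continuous_snd continuous_fst).inter
      (isClosed_le continuous_fst continuous_const))

theorem subset_Icc_prod_Icc : Triangle ⊆ Icc 0 π ×ˢ Icc 0 π :=
  fun _ ⟨h0, hle, hπ⟩ => ⟨⟨h0.trans hle, hπ⟩, h0, hle.trans hπ⟩

theorem isCompact : IsCompact Triangle :=
  (isCompact_Icc.prod isCompact_Icc).of_isClosed_subset isClosed subset_Icc_prod_Icc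

theorem mapsTo_fst : MapsTo Prod.fst Triangle (Icc 0 π) := fun _ hp => (subset_Icc_prod_Icc hp).1

theorem mapsTo_snd : MapsTo Prod.snd Triangle (Icc 0 π) := fun _ hp => (subset_Icc_prod_Icc hp).2

theorem mk_mem_of_mem_Icc_zero {x t : ℝ} (hx : x ∈ Icc 0 π) (ht : t ∈ Icc 0 x) :
    (x, t) ∈ Triangle :=
  ⟨ht.1, ht.2, hx.2⟩

theorem mk_mem_of_mem_Icc_pi {x t : ℝ} (ht : t ∈ Icc 0 π) (hx : x ∈ Icc t π) :
    (x, t) ∈ Triangle :=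
  ⟨ht.1, hx.1, hx.2⟩

variable {G : ℝ × ℝ → ℂ}

theorem intervalIntegrable_from_zero (hG : ContinuousOn G Triangle) {x : ℝ}
    (hx : x ∈ Icc 0 π) : IntervalIntegrable (fun t => G (x, t)) volume 0 x :=
  (hG.comp (Continuous.prodMk_right x).continuousOn
    fun _ ht => mk_mem_of_mem_Icc_zero hx ht).intervalIntegrable_of_Icc hx.1

theorem continuousOn_integral_from_zero (hG : ContinuousOn G Triangle) :
    ContinuousOn (fun x => ∫ t in (0:ℝ)..x, G (x, t)) (Icc 0 π) := by
  obtain ⟨H, hH, hHG⟩ := hG.exists_continuous_eqOn isClosed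
  refine (intervalIntegral.continuous_parametric_intervalIntegral_of_continuous
    (μ := volume) (a₀ := 0) (f := fun x t => H (x, t)) hH continuous_id).continuousOn.congr
    fun x hx => ?_
  refine intervalIntegral.integral_congr fun t ht => (hHG ?_).symm
  rw [uIcc_of_le hx.1] at ht
  exact mk_mem_of_mem_Icc_zero hx ht

theorem continuousOn_integral_to_pi (hG : ContinuousOn G Triangle) :
    ContinuousOn (fun t => ∫ x in t..π, G (x, t)) (Icc 0 π) := by
  obtain ⟨H, hH, hHG⟩ := hG.exists_continuous_eqOn isClosed
  have hcont : Continuous fun t => ∫ x in t..π, H (x, t) := by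
    simp_rw [intervalIntegral.integral_symm π]
    exact (intervalIntegral.continuous_parametric_intervalIntegral_of_continuous
      (a₀ := π) (f := fun t x => H (x, t)) (hH.comp continuous_swap) continuous_id).neg
  refine hcont.continuousOn.congr fun t ht => ?_
  refine intervalIntegral.integral_congr fun x hx => (hHG ?_).symm
  rw [uIcc_of_le ht.2] at hx
  exact mk_mem_of_mem_Icc_pi ht hx

theorem integral_integral_swap (hG : ContinuousOn G Triangle) :
    ∫ x in (0:ℝ)..π, ∫ t in (0:ℝ)..x, G (x, t)
      = ∫ t in (0:ℝ)..π, ∫ x in t..π, G (x, t) := by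
  set F := Triangle.indicator G
  have hF : Integrable (Function.uncurry fun x t => F (x, t)) (volume.prod volume) := by
    rw [← Measure.volume_eq_prod]
    exact (hG.integrableOn_compact isCompact).integrable_indicator isClosed.measurableSet
  have hx_slice (x : ℝ) :
      ∫ t, F (x, t) = (Icc 0 π).indicator (fun x => ∫ t in (0:ℝ)..x, G (x, t)) x := by
    by_cases hx : x ∈ Icc 0 π
    · have : (fun t => F (x, t)) = (Icc 0 x).indicator fun t => G (x, t) := by
        ext t
        simp [F, indicator_apply, Triangle, hx.2]
      rw [this, integral_indicator measurableSet_Icc, integral_Icc_eq_integral_Ioc,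
        ← intervalIntegral.integral_of_le hx.1, indicator_of_mem hx]
    · have : ∀ t, F (x, t) = 0 := fun t => indicator_of_notMem (fun h => hx (mapsTo_fst h)) _
      simp [this, indicator_of_notMem hx]
  have ht_slice (t : ℝ) :
      ∫ x, F (x, t) = (Icc 0 π).indicator (fun t => ∫ x in t..π, G (x, t)) t := by
    by_cases ht : t ∈ Icc 0 π
    · have : (fun x => F (x, t)) = (Icc t π).indicator fun x => G (x, t) := by
        ext x
        simp [F, indicator_apply, Triangle, ht.1]
      rw [this, integral_indicator measurableSet_Icc, integral_Icc_eq_integral_Ioc,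
        ← intervalIntegral.integral_of_le ht.2, indicator_of_mem ht]
    · have : ∀ x, F (x, t) = 0 := fun x => indicator_of_notMem (fun h => ht (mapsTo_snd h)) _
      simp [this, indicator_of_notMem ht]
  calc ∫ x in (0:ℝ)..π, ∫ t in (0:ℝ)..x, G (x, t) = ∫ x, ∫ t, F (x, t) := by
        simp_rw [hx_slice, integral_indicator measurableSet_Icc, integral_Icc_eq_integral_Ioc,
          intervalIntegral.integral_of_le pi_pos.le]
    _ = ∫ t, ∫ x, F (x, t) := MeasureTheory.integral_integral_swap hF
    _ = ∫ t in (0:ℝ)..π, ∫ x in t..π, G (x, t) := by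
        simp_rw [ht_slice, integral_indicator measurableSet_Icc, integral_Icc_eq_integral_Ioc,
          intervalIntegral.integral_of_le pi_pos.le]

end Triangle

section Solutions

def IsSolution (K : ℝ → ℝ → ℂ) (lam : ℂ) (y y' : ℝ → ℂ) : Prop :=
  ∀ x ∈ Icc (0:ℝ) π, HasDerivWithinAt y (y' x) (Icc 0 π) x ∧
    I * y' x + ∫ t in (0:ℝ)..x, K x t * y t = lam * y x

def IsAdjointSolution (K : ℝ → ℝ → ℂ) (lam : ℂ) (ψ ψ' : ℝ → ℂ) : Prop :=
  ∀ x ∈ Icc (0:ℝ) π, HasDerivWithinAt ψ (ψ' x) (Icc 0 π) x ∧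
    -(I * ψ' x) + ∫ t in x..π, K t x * ψ t = lam * ψ x

variable {K L : ℝ → ℝ → ℂ} {lam : ℂ} {y y' ψ ψ' : ℝ → ℂ}

namespace IsSolution

theorem continuousOn (hy : IsSolution K lam y y') : ContinuousOn y (Icc 0 π) :=
  fun x hx => (hy x hx).1.continuousWithinAt

theorem continuousOn_deriv (hK : ContinuousOn (fun p : ℝ × ℝ => K p.1 p.2) Triangle)
    (hy : IsSolution K lam y y') : ContinuousOn y' (Icc 0 π) := by
  have hKy : ContinuousOn (fun x => ∫ t in (0:ℝ)..x, K x t * y t) (Icc 0 π) :=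
    Triangle.continuousOn_integral_from_zero (G := fun p => K p.1 p.2 * y p.2)
      (hK.mul (hy.continuousOn.comp continuous_snd.continuousOn Triangle.mapsTo_snd))
  refine ContinuousOn.congr (f := fun x => I * ((∫ t in (0:ℝ)..x, K x t * y t) - lam * y x))
    (continuousOn_const.mul (hKy.sub (continuousOn_const.mul hy.continuousOn))) fun x hx => ?_
  linear_combination (-I) * (hy x hx).2 + y' x * I_mul_I

end IsSolution

namespace IsAdjointSolution

theorem continuousOn (hψ : IsAdjointSolution K lam ψ ψ') : ContinuousOn ψ (Icc 0 π) :=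
  fun x hx => (hψ x hx).1.continuousWithinAt

theorem continuousOn_deriv (hK : ContinuousOn (fun p : ℝ × ℝ => K p.1 p.2) Triangle)
    (hψ : IsAdjointSolution K lam ψ ψ') : ContinuousOn ψ' (Icc 0 π) := by
  have hKψ : ContinuousOn (fun x => ∫ t in x..π, K t x * ψ t) (Icc 0 π) :=
    Triangle.continuousOn_integral_to_pi (G := fun p => K p.1 p.2 * ψ p.1)
      (hK.mul (hψ.continuousOn.comp continuous_fst.continuousOn Triangle.mapsTo_fst))
  refine ContinuousOn.congr (f := fun x => I * (lam * ψ x - ∫ t in x..π, K t x * ψ t))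
    (continuousOn_const.mul ((continuousOn_const.mul hψ.continuousOn).sub hKψ)) fun x hx => ?_
  linear_combination I * (hψ x hx).2 + ψ' x * I_mul_I

theorem integral_mul_integral_sub_eq (hK : ContinuousOn (fun p : ℝ × ℝ => K p.1 p.2) Triangle)
    (hL : ContinuousOn (fun p : ℝ × ℝ => L p.1 p.2) Triangle)
    (hψ : IsAdjointSolution K lam ψ ψ') (hy : IsSolution L lam y y') :
    ∫ x in (0:ℝ)..π, ψ x * ∫ t in (0:ℝ)..x, (K x t - L x t) * y t
      = I * (ψ π * y π - ψ 0 * y 0) := by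
  have hI : uIcc 0 π = Icc 0 π := uIcc_of_le pi_pos.le
  have hKy : ContinuousOn (fun p : ℝ × ℝ => K p.1 p.2 * y p.2) Triangle :=
    hK.mul (hy.continuousOn.comp continuous_snd.continuousOn Triangle.mapsTo_snd)
  have hLy : ContinuousOn (fun p : ℝ × ℝ => L p.1 p.2 * y p.2) Triangle :=
    hL.mul (hy.continuousOn.comp continuous_snd.continuousOn Triangle.mapsTo_snd)
  have hfubini : ∫ x in (0:ℝ)..π, ψ x * ∫ t in (0:ℝ)..x, K x t * y t
      = ∫ t in (0:ℝ)..π, (lam * ψ t + I * ψ' t) * y t :=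
    calc ∫ x in (0:ℝ)..π, ψ x * ∫ t in (0:ℝ)..x, K x t * y t
        = ∫ x in (0:ℝ)..π, ∫ t in (0:ℝ)..x, ψ x * (K x t * y t) := by
          simp_rw [intervalIntegral.integral_const_mul]
      _ = ∫ t in (0:ℝ)..π, ∫ x in t..π, ψ x * (K x t * y t) :=
          Triangle.integral_integral_swap (G := fun p => ψ p.1 * (K p.1 p.2 * y p.2))
            ((hψ.continuousOn.comp continuous_fst.continuousOn Triangle.mapsTo_fst).mul hKy)
      _ = ∫ t in (0:ℝ)..π, (∫ x in t..π, K x t * ψ x) * y t := by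
          refine intervalIntegral.integral_congr fun t _ => ?_
          rw [← intervalIntegral.integral_mul_const]
          congr 1 with x
          ring
      _ = ∫ t in (0:ℝ)..π, (lam * ψ t + I * ψ' t) * y t := by
          refine intervalIntegral.integral_congr fun t ht => ?_
          rw [hI] at ht
          linear_combination y t * (hψ t ht).2
  have hsplit : ∀ x ∈ uIcc 0 π, ψ x * ∫ t in (0:ℝ)..x, (K x t - L x t) * y t
      = ψ x * (∫ t in (0:ℝ)..x, K x t * y t) - ψ x * (lam * y x - I * y' x) := by
    intro x hx
    rw [hI] at hx
    simp_rw [sub_mul]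
    rw [intervalIntegral.integral_sub (Triangle.intervalIntegrable_from_zero hKy hx)
      (Triangle.intervalIntegrable_from_zero hLy hx)]
    linear_combination (-ψ x) * (hy x hx).2
  have hψKy : IntervalIntegrable (fun x => ψ x * ∫ t in (0:ℝ)..x, K x t * y t) volume 0 π :=
    (hψ.continuousOn.mul (Triangle.continuousOn_integral_from_zero hKy)).intervalIntegrable_of_Icc
      pi_pos.le
  have hψLy : IntervalIntegrable (fun x => ψ x * (lam * y x - I * y' x)) volume 0 π :=
    (hψ.continuousOn.mul ((continuousOn_const.mul hy.continuousOn).sub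
      (continuousOn_const.mul (hy.continuousOn_deriv hL)))).intervalIntegrable_of_Icc pi_pos.le
  have hψ'y : IntervalIntegrable (fun t => (lam * ψ t + I * ψ' t) * y t) volume 0 π :=
    (((continuousOn_const.mul hψ.continuousOn).add (continuousOn_const.mul
      (hψ.continuousOn_deriv hK))).mul hy.continuousOn).intervalIntegrable_of_Icc pi_pos.le
  calc ∫ x in (0:ℝ)..π, ψ x * ∫ t in (0:ℝ)..x, (K x t - L x t) * y t
      = (∫ x in (0:ℝ)..π, ψ x * ∫ t in (0:ℝ)..x, K x t * y t)
          - ∫ x in (0:ℝ)..π, ψ x * (lam * y x - I * y' x) := by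
        rw [intervalIntegral.integral_congr hsplit, intervalIntegral.integral_sub hψKy hψLy]
    _ = ∫ x in (0:ℝ)..π, I * (ψ' x * y x + ψ x * y' x) := by
        rw [hfubini, ← intervalIntegral.integral_sub hψ'y hψLy]
        congr 1 with x
        ring
    _ = I * (ψ π * y π - ψ 0 * y 0) := by
        rw [intervalIntegral.integral_const_mul,
          intervalIntegral.integral_deriv_mul_eq_sub_of_hasDerivWithinAt
            (by rw [hI]; exact fun x hx => (hψ x hx).1) (by rw [hI]; exact fun x hx => (hy x hx).1)
            ((hψ.continuousOn_deriv hK).intervalIntegrable_of_Icc pi_pos.le)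
            ((hy.continuousOn_deriv hL).intervalIntegrable_of_Icc pi_pos.le)]

end IsAdjointSolution

end Solutions

/-- If the characteristic functions coincide, `e(π,λ) = ẽ(π,λ)` for all `λ`, then
`∫₀^π ψ(x,λ) ∫₀ˣ (M(x,t) − M̃(x,t)) ẽ(t,λ) dt dx = 0` for all `λ`, where `ψ(·,λ)`
solves the adjoint equation (13) with kernel `M`, `ψ(π,λ) = 1`, and `ẽ(·,λ)` solves
equation (1) with kernel `M̃`, `ẽ(0,λ) = 1`. -/
theorem stmt_17 (M Mt : ℝ → ℝ → ℂ)
    (hM : ContinuousOn (fun p : ℝ × ℝ => M p.1 p.2) Triangle)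
    (hMt : ContinuousOn (fun p : ℝ × ℝ => Mt p.1 p.2) Triangle)
    (ψ : ℂ → ℝ → ℂ) (e et : ℝ → ℂ → ℂ)
    (hψ : ∀ lam : ℂ, ∃ ψ' : ℝ → ℂ,
      (∀ x ∈ Icc (0:ℝ) Real.pi,
        HasDerivWithinAt (ψ lam) (ψ' x) (Icc 0 Real.pi) x ∧
        -(Complex.I * ψ' x) + (∫ t in x..Real.pi, M t x * ψ lam t)
          = lam * ψ lam x) ∧
      ψ lam Real.pi = 1)
    (he : ∀ lam : ℂ, ∃ e' : ℝ → ℂ,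
      (∀ x ∈ Icc (0:ℝ) Real.pi,
        HasDerivWithinAt (fun x => e x lam) (e' x) (Icc 0 Real.pi) x ∧
        Complex.I * e' x + (∫ t in (0:ℝ)..x, M x t * e t lam) = lam * e x lam) ∧
      e 0 lam = 1)
    (het : ∀ lam : ℂ, ∃ et' : ℝ → ℂ,
      (∀ x ∈ Icc (0:ℝ) Real.pi,
        HasDerivWithinAt (fun x => et x lam) (et' x) (Icc 0 Real.pi) x ∧
        Complex.I * et' x + (∫ t in (0:ℝ)..x, Mt x t * et t lam) = lam * et x lam) ∧
      et 0 lam = 1)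
    (hchar : ∀ lam : ℂ, e Real.pi lam = et Real.pi lam) :
    ∀ lam : ℂ,
      (∫ x in (0:ℝ)..Real.pi,
        ψ lam x * ∫ t in (0:ℝ)..x, (M x t - Mt x t) * et t lam) = 0 := by
  intro lam
  obtain ⟨ψ', hψ_sol, hψ_pi⟩ := hψ lam
  obtain ⟨e', he_sol, he_zero⟩ := he lam
  obtain ⟨et', het_sol, het_zero⟩ := het lam
  have hψ_zero : ψ lam 0 = e π lam := by
    have h := IsAdjointSolution.integral_mul_integral_sub_eq (y := fun x => e x lam)
      hM hM hψ_sol he_sol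
    simp only [sub_self, zero_mul, mul_zero, intervalIntegral.integral_zero, hψ_pi, he_zero] at h
    linear_combination -(mul_eq_zero.1 h.symm).resolve_left I_ne_zero
  rw [IsAdjointSolution.integral_mul_integral_sub_eq (y := fun x => et x lam)
    hM hMt hψ_sol het_sol, hψ_pi, het_zero, hψ_zero, hchar]
  ring
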